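/- arXiv:2210.11932 — 4 statements merged into one kernel-verified Lean document; each statement's English description precedes it below -/
import Mathlib

section
/- Let G be a random matrix with values in ℂ^{N_R×N_T}, let η ∈ [0,1), let c ∈ ℝ and ε > 0, and suppose that inf_{Q ∈ Q_P} ℙ[f(G,Q) < c − ε] < η. Then there exist a real number μ with 1 ≤ μ ≤ 2 and a positive definite (hence non-singular) matrix Q̂ ∈ Q_P such that ℙ[f(G,Q̂) < c − με] ≤ η. -/
/-!
Take `Q₀ ∈ Q_P` whose outage probability at `c - ε` is below `η`, and put
`Q̂ = t Q₀ + s I` with `t = 2^(-ε/N_R)` and `s = (1 - t) P / N_T`, so that `tr Q̂ ≤ P` and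
`Q̂` is positive definite. The determinant is monotone for the Loewner order on positive
definite matrices. Since `t (I + M) ≤ I + t M` for `M ≥ 0`, scaling `Q₀` by `t` lowers `f` by
at most `-N_R log₂ t = ε`, and adding `s I` does not lower it; so the outage event of `Q̂` at
`c - 2ε` lies inside that of `Q₀` at `c - ε`.
-/

open MeasureTheory
open scoped ComplexOrder ENNReal

/-- The set `Q_P` of complex positive semidefinite Hermitian `N_T × N_T` matrices
with trace at most `P`. -/
def QPset (nT : ℕ) (P : ℝ) : Set (Matrix (Fin nT) (Fin nT) ℂ) :=
  {Q | Q.PosSemidef ∧ Q.trace.re ≤ P}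

/-- `f(g, Q) = log₂ det(I + σ⁻² g Q gᴴ)`. -/
noncomputable def rateFn {nR nT : ℕ} (σ : ℝ) (g : Matrix (Fin nR) (Fin nT) ℂ)
    (Q : Matrix (Fin nT) (Fin nT) ℂ) : ℝ :=
  Real.logb 2 ((1 + ((σ : ℂ) ^ 2)⁻¹ • (g * Q * g.conjTranspose)).det.re)

open scoped MatrixOrder

namespace Matrix

variable {𝕜 n : Type*} [RCLike 𝕜] [Fintype n] [DecidableEq n]

theorem one_le_det_of_one_le {A : Matrix n n 𝕜} (hA : 1 ≤ A) : 1 ≤ A.det := by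
  have hH : A.IsHermitian := by
    simpa using (le_iff.mp hA).isHermitian.add isHermitian_one
  have h1 : ∀ i, 1 ≤ hH.eigenvalues i := fun i =>
    (algebraMap_le_iff_le_spectrum (r := (1 : ℝ)) (a := A) hH.isSelfAdjoint).mp
      (by simpa using hA) _ (hH.eigenvalues_mem_spectrum_real i)
  rw [hH.det_eq_prod_eigenvalues, ← RCLike.ofReal_prod]
  exact_mod_cast Finset.one_le_prod fun i _ => h1 i

theorem det_le_det_of_le {A B : Matrix n n 𝕜} (hA : A.PosDef) (hAB : A ≤ B) :
    A.det ≤ B.det := by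
  set S := CFC.sqrt A
  have hSS : S * S = A := CFC.sqrt_mul_sqrt_self A hA.posSemidef.nonneg
  have hS : IsUnit S.det := by
    rw [isUnit_iff_ne_zero, ← pow_ne_zero_iff two_ne_zero, sq, ← det_mul, hSS]
    exact hA.det_pos.ne'
  have hSinv : 0 ≤ S⁻¹ := by
    rw [hA.posSemidef.inv_sqrt]
    exact CFC.sqrt_nonneg _
  have hone : 1 ≤ S⁻¹ * B * S⁻¹ := by
    calc (1 : Matrix n n 𝕜) = S⁻¹ * A * S⁻¹ := by
          rw [← hSS, ← mul_assoc, nonsing_inv_mul _ hS, one_mul, mul_nonsing_inv _ hS]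
      _ ≤ S⁻¹ * B * S⁻¹ := conjugate_le_conjugate_of_nonneg hAB hSinv
  have hdet : B.det = A.det * (S⁻¹ * B * S⁻¹).det := by
    rw [← hSS, det_mul, det_mul, det_mul]
    linear_combination (-(S.det * S⁻¹.det) - 1) * B.det * det_nonsing_inv_mul_det S hS
  rw [hdet]
  exact le_mul_of_one_le_right hA.det_pos.le (one_le_det_of_one_le hone)

theorem PosDef.logb_det_re_le_of_le {A B : Matrix n n ℂ} (hA : A.PosDef) (hAB : A ≤ B) :
    Real.logb 2 A.det.re ≤ Real.logb 2 B.det.re :=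
  Real.logb_le_logb_of_le one_lt_two (Complex.pos_iff.mp hA.det_pos).1
    (Complex.le_def.mp (det_le_det_of_le hA hAB)).1

end Matrix

section rateFn

open Matrix

variable {nR nT : ℕ} (σ : ℝ) (g : Matrix (Fin nR) (Fin nT) ℂ) {Q : Matrix (Fin nT) (Fin nT) ℂ}

theorem inv_ofReal_sq_nonneg : 0 ≤ ((σ : ℂ) ^ 2)⁻¹ := by
  rw [← Complex.ofReal_pow, ← Complex.ofReal_inv]
  exact Complex.zero_le_real.mpr (by positivity)

theorem posDef_one_add_smul_mul_mul_conjTranspose (hQ : Q.PosSemidef) :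
    (1 + ((σ : ℂ) ^ 2)⁻¹ • (g * Q * gᴴ)).PosDef :=
  PosDef.one.add_posSemidef ((hQ.mul_mul_conjTranspose_same g).smul (inv_ofReal_sq_nonneg σ))

theorem rateFn_mono {Q' : Matrix (Fin nT) (Fin nT) ℂ} (hQ : Q.PosSemidef) (hQQ' : Q ≤ Q') :
    rateFn σ g Q ≤ rateFn σ g Q' := by
  refine (posDef_one_add_smul_mul_mul_conjTranspose σ g hQ).logb_det_re_le_of_le ?_
  rw [le_iff, add_sub_add_left_eq_sub, ← smul_sub, ← Matrix.sub_mul, ← Matrix.mul_sub]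
  exact ((le_iff.mp hQQ').mul_mul_conjTranspose_same g).smul (inv_ofReal_sq_nonneg σ)

theorem rateFn_add_logb_le_rateFn_smul (hQ : Q.PosSemidef) {t : ℝ} (ht₀ : 0 < t) (ht₁ : t ≤ 1) :
    rateFn σ g Q + nR * Real.logb 2 t ≤ rateFn σ g (t • Q) := by
  set M := ((σ : ℂ) ^ 2)⁻¹ • (g * Q * gᴴ)
  have hM : (1 + M).PosDef := posDef_one_add_smul_mul_mul_conjTranspose σ g hQ
  have hle : t • (1 + M) ≤ 1 + t • M := by
    rw [le_iff, smul_add, add_sub_add_right_eq_sub]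
    have h : ((1 - t) • 1 : Matrix (Fin nR) (Fin nR) ℂ).PosSemidef :=
      PosSemidef.one.smul (sub_nonneg.mpr ht₁)
    rwa [sub_smul, one_smul] at h
  have hdet : (t • (1 + M)).det.re = t ^ nR * (1 + M).det.re := by
    rw [← algebraMap_smul ℂ t, det_smul, Fintype.card_fin, ← map_pow, Complex.coe_algebraMap,
      Complex.re_ofReal_mul]
  have hpos : 0 < (1 + M).det.re := (Complex.pos_iff.mp hM.det_pos).1
  calc rateFn σ g Q + nR * Real.logb 2 t = Real.logb 2 (t • (1 + M)).det.re := by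
        rw [hdet, Real.logb_mul (by positivity) hpos.ne', Real.logb_pow]
        simp only [rateFn, M]
        ring
    _ ≤ Real.logb 2 (1 + t • M).det.re := (hM.smul ht₀).logb_det_re_le_of_le hle
    _ = rateFn σ g (t • Q) := by
        simp only [rateFn, M, Matrix.mul_smul, Matrix.smul_mul, smul_comm (t : ℝ)]

end rateFn

theorem exists_posDef_mem_QPset_smul_le {nT : ℕ} {P : ℝ} {Q : Matrix (Fin nT) (Fin nT) ℂ}
    (hQ : Q ∈ QPset nT P) (hnT : 0 < nT) (hP : 0 < P) {t : ℝ} (ht₀ : 0 ≤ t) (ht₁ : t < 1) :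
    ∃ Q' ∈ QPset nT P, Q'.PosDef ∧ t • Q ≤ Q' := by
  set s := (1 - t) * P / nT
  have hs : 0 < s := by have := sub_pos.mpr ht₁; positivity
  have hpd : (t • Q + s • 1).PosDef := (Matrix.PosDef.one.smul hs).posSemidef_add (hQ.1.smul ht₀)
  refine ⟨t • Q + s • 1, ⟨hpd.posSemidef, ?_⟩, hpd, ?_⟩
  · have htr : t * Q.trace.re ≤ t * P := mul_le_mul_of_nonneg_left hQ.2 ht₀
    have hsn : s * nT = (1 - t) * P := by simp only [s]; field_simp
    simp only [Matrix.trace_add, Matrix.trace_smul, Matrix.trace_one, Fintype.card_fin,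
      Complex.add_re, Complex.smul_re, smul_eq_mul, Complex.natCast_re]
    linarith
  · rw [le_add_iff_nonneg_right]
    exact (Matrix.PosDef.one.smul hs).posSemidef.nonneg

theorem exists_posDef_Q_outage_le_general {Ω : Type*} [MeasurableSpace Ω] (μ : Measure Ω)
    (nT nR : ℕ) (hnT : 1 ≤ nT) (hnR : 1 ≤ nR) (P σ : ℝ) (hP : 0 < P)
    (G : Ω → Fin nR → Fin nT → ℂ)
    (η : ℝ) (c ε : ℝ) (hε : 0 < ε)
    (hinf : (⨅ Q ∈ QPset nT P, μ {ω | rateFn σ (Matrix.of (G ω)) Q < c - ε})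
      < ENNReal.ofReal η) :
    ∃ μ' : ℝ, 1 ≤ μ' ∧ μ' ≤ 2 ∧
      ∃ Qhat ∈ QPset nT P, Qhat.PosDef ∧
        μ {ω | rateFn σ (Matrix.of (G ω)) Qhat < c - μ' * ε} ≤ ENNReal.ofReal η := by
  obtain ⟨Q₀, hQ₀, hlt⟩ : ∃ Q₀ ∈ QPset nT P,
      μ {ω | rateFn σ (Matrix.of (G ω)) Q₀ < c - ε} < ENNReal.ofReal η := by
    simpa only [iInf_lt_iff, exists_prop] using hinf
  have hnR₀ : (0 : ℝ) < nR := by exact_mod_cast hnR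
  set t : ℝ := 2 ^ (-(ε / nR))
  have ht₀ : 0 < t := by positivity
  have ht₁ : t < 1 := Real.rpow_lt_one_of_one_lt_of_neg one_lt_two (neg_neg_of_pos (by positivity))
  have hlog : (nR : ℝ) * Real.logb 2 t = -ε := by
    rw [Real.logb_rpow two_pos (by norm_num)]
    field_simp
  obtain ⟨Qhat, hQhat, hpd, hle⟩ := exists_posDef_mem_QPset_smul_le hQ₀ hnT hP ht₀.le ht₁
  refine ⟨2, by norm_num, le_rfl, Qhat, hQhat, hpd, (measure_mono fun ω hω => ?_).trans hlt.le⟩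
  have hscale := rateFn_add_logb_le_rateFn_smul σ (Matrix.of (G ω)) hQ₀.1 ht₀ ht₁.le
  have hmono := rateFn_mono σ (Matrix.of (G ω)) (hQ₀.1.smul ht₀.le) hle
  rw [Set.mem_ofPred_eq] at hω ⊢
  linarith

/-- If `inf_{Q ∈ Q_P} ℙ[f(G,Q) < c - ε] < η`, then there are `μ' ∈ [1,2]` and a
positive definite (hence non-singular) `Q̂ ∈ Q_P` with `ℙ[f(G,Q̂) < c - μ'ε] ≤ η`. -/
theorem exists_posDef_Q_outage_le {Ω : Type*} [MeasurableSpace Ω] (μ : Measure Ω)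
    [IsProbabilityMeasure μ]
    (nT nR : ℕ) (hnT : 1 ≤ nT) (hnR : 1 ≤ nR) (P σ : ℝ) (hP : 0 < P) (hσ : 0 < σ)
    (G : Ω → Fin nR → Fin nT → ℂ) (hG : Measurable G)
    (η : ℝ) (hη : η ∈ Set.Ico (0 : ℝ) 1) (c ε : ℝ) (hε : 0 < ε)
    (hinf : (⨅ Q ∈ QPset nT P, μ {ω | rateFn σ (Matrix.of (G ω)) Q < c - ε})
      < ENNReal.ofReal η) :
    ∃ μ' : ℝ, 1 ≤ μ' ∧ μ' ≤ 2 ∧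
      ∃ Qhat ∈ QPset nT P, Qhat.PosDef ∧
        μ {ω | rateFn σ (Matrix.of (G ω)) Qhat < c - μ' * ε} ≤ ENNReal.ofReal η :=
  exists_posDef_Q_outage_le_general μ nT nR hnT hnR P σ hP G η c ε hε hinf
end

section
/- Let a > 0, P > 0, σ > 0, let g ∈ ℂ^{N_R×N_T} with operator norm ‖g‖ ≤ a, and let t_1,…,t_n ∈ ℂ^{N_T} satisfy (1/n) ∑_{i=1}^n ‖t_i‖² ≤ P. Let ξ_1,…,ξ_n be independent, identically distributed centered circularly-symmetric complex Gaussian vectors in ℂ^{N_R} with covariance matrix σ² I_{N_R}, and set Z_i = g t_i + ξ_i. Then ℙ[∑_{i=1}^n ‖Z_i‖² ≥ n(2a²P + 2N_Rσ² + 2)] ≤ ((1 + 1/(σ²N_R)) · 2^{−1/(σ²N_R ln 2)})^n. -/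
open MeasureTheory ProbabilityTheory
open scoped ENNReal

/-- The operator norm of a complex matrix with respect to the Euclidean norms. -/
noncomputable def matOpNorm {nR nT : ℕ} (g : Matrix (Fin nR) (Fin nT) ℂ) : ℝ :=
  ‖LinearMap.toContinuousLinearMap (Matrix.toEuclideanLin g)‖

/-- The centered circularly-symmetric complex Gaussian law on `ℂ` with variance `2v`:
real and imaginary parts are independent centered real Gaussians of variance `v`. -/
noncomputable def complexGaussian (v : NNReal) : Measure ℂ :=
  Measure.map (fun p : ℝ × ℝ => (p.1 : ℂ) + p.2 * Complex.I)
    ((ProbabilityTheory.gaussianReal 0 v).prod (ProbabilityTheory.gaussianReal 0 v))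

/-!
Chernoff bound. Since `‖g tᵢ + ξᵢ‖² ≤ 2 ‖g tᵢ‖² + 2 ‖ξᵢ‖²` and `∑ᵢ ‖g tᵢ‖² ≤ a² n P`, the event
forces the noise energy `∑ᵢ ‖ξᵢ‖²` above `n (N_R σ² + 1)`. This energy is a sum of `2 n N_R`
independent squares of `N(0, σ²/2)` variables, and `E[exp (s X²)] = (1 - 2 s v)^{-1/2}` for
`X ~ N(0, v)`, because the density tilted by `exp (s x²)` is again Gaussian, of variance
`v / (1 - 2 s v)`. With `s = 1 / (σ² (N_R σ² + 1))` Markov's inequality bounds the probability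
by `((1 + x) e^{-x})^{n N_R}` where `x = 1 / (σ² N_R)`, and `(1 + x) e^{-x} ≤ 1` lowers the
exponent to `n`.
-/

open Real
open scoped NNReal

section GaussianSquare

variable {v : ℝ≥0} {s : ℝ}

lemma integrable_gaussianReal_iff {E : Type*} [NormedAddCommGroup E] [NormedSpace ℝ E]
    {μ : ℝ} (hv : v ≠ 0) {f : ℝ → E} :
    Integrable f (gaussianReal μ v) ↔ Integrable (fun x => gaussianPDFReal μ v x • f x) := by
  rw [gaussianReal_of_var_ne_zero _ hv, integrable_withDensity_iff_integrable_smul'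
    (measurable_gaussianPDF _ _) (ae_of_all _ fun _ => gaussianPDF_lt_top)]
  simp only [gaussianPDF, ENNReal.toReal_ofReal (gaussianPDFReal_nonneg _ _ _)]

lemma gaussianPDFReal_mul_exp_mul_sq (hv : v ≠ 0) (hs : 2 * s * v < 1) (x : ℝ) :
    gaussianPDFReal 0 v x * exp (s * x ^ 2) =
      (√(1 - 2 * s * v))⁻¹ * gaussianPDFReal 0 (v / (1 - 2 * s * v)).toNNReal x := by
  have hv : (0 : ℝ) < v := NNReal.coe_pos.2 (pos_iff_ne_zero.2 hv)
  have hd : 0 < 1 - 2 * s * v := by linarith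
  have hexp :
      -(x - 0) ^ 2 / (2 * v) + s * x ^ 2 = -(x - 0) ^ 2 / (2 * (v / (1 - 2 * s * v))) := by
    field_simp
    ring
  have hsqrt : √(2 * π * (v / (1 - 2 * s * v))) = √(2 * π * v) / √(1 - 2 * s * v) := by
    rw [mul_div_assoc', Real.sqrt_div (by positivity)]
  rw [gaussianPDFReal, gaussianPDFReal, Real.coe_toNNReal _ (by positivity), hsqrt, inv_div,
    mul_assoc, ← Real.exp_add, hexp, ← mul_assoc]
  congr 1
  rw [div_eq_mul_inv, inv_mul_cancel_left₀ (Real.sqrt_pos.2 hd).ne']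

lemma integrable_exp_mul_sq_gaussianReal (hv : v ≠ 0) (hs : 2 * s * v < 1) :
    Integrable (fun x => exp (s * x ^ 2)) (gaussianReal 0 v) := by
  simp_rw [integrable_gaussianReal_iff hv, smul_eq_mul, gaussianPDFReal_mul_exp_mul_sq hv hs]
  exact (integrable_gaussianPDFReal _ _).const_mul _

lemma integral_exp_mul_sq_gaussianReal (hv : v ≠ 0) (hs : 2 * s * v < 1) :
    ∫ x, exp (s * x ^ 2) ∂gaussianReal 0 v = (√(1 - 2 * s * v))⁻¹ := by
  have hw : (v / (1 - 2 * s * v)).toNNReal ≠ 0 := by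
    have : (0 : ℝ) < v := NNReal.coe_pos.2 (pos_iff_ne_zero.2 hv)
    have : 0 < 1 - 2 * s * v := by linarith
    exact (Real.toNNReal_pos.2 (by positivity)).ne'
  simp_rw [integral_gaussianReal_eq_integral_smul hv, smul_eq_mul,
    gaussianPDFReal_mul_exp_mul_sq hv hs, integral_const_mul,
    integral_gaussianPDFReal_eq_one _ hw, mul_one]

end GaussianSquare

section ComplexGaussian

variable {v : ℝ≥0} {s : ℝ}

lemma measurable_ofReal_add_ofReal_mul_I :
    Measurable fun p : ℝ × ℝ => (p.1 : ℂ) + p.2 * Complex.I := by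
  fun_prop

instance : IsProbabilityMeasure (complexGaussian v) :=
  Measure.isProbabilityMeasure_map measurable_ofReal_add_ofReal_mul_I.aemeasurable

lemma exp_mul_sq_norm_ofReal_add_ofReal_mul_I (x y : ℝ) :
    exp (s * ‖(x : ℂ) + y * Complex.I‖ ^ 2) = exp (s * x ^ 2) * exp (s * y ^ 2) := by
  rw [Complex.sq_norm, Complex.normSq_add_mul_I, ← Real.exp_add, mul_add]

lemma integrable_exp_mul_sq_norm_complexGaussian (hv : v ≠ 0) (hs : 2 * s * v < 1) :
    Integrable (fun z : ℂ => exp (s * ‖z‖ ^ 2)) (complexGaussian v) := by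
  rw [complexGaussian, integrable_map_measure (by fun_prop)
    measurable_ofReal_add_ofReal_mul_I.aemeasurable]
  simp only [Function.comp_def, exp_mul_sq_norm_ofReal_add_ofReal_mul_I]
  exact (integrable_exp_mul_sq_gaussianReal hv hs).mul_prod
    (integrable_exp_mul_sq_gaussianReal hv hs)

lemma integral_exp_mul_sq_norm_complexGaussian (hv : v ≠ 0) (hs : 2 * s * v < 1) :
    ∫ z, exp (s * ‖z‖ ^ 2) ∂complexGaussian v = (1 - 2 * s * v)⁻¹ := by
  rw [complexGaussian, integral_map measurable_ofReal_add_ofReal_mul_I.aemeasurable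
    (by fun_prop)]
  simp only [exp_mul_sq_norm_ofReal_add_ofReal_mul_I]
  rw [integral_prod_mul (fun x => exp (s * x ^ 2)) (fun y => exp (s * y ^ 2)),
    integral_exp_mul_sq_gaussianReal hv hs, ← mul_inv, Real.mul_self_sqrt (by linarith)]

variable {κ : Type*} [Fintype κ]

lemma exp_mul_sum_sq_norm (x : κ → ℂ) :
    exp (s * ∑ j, ‖x j‖ ^ 2) = ∏ j, exp (s * ‖x j‖ ^ 2) := by
  rw [Finset.mul_sum, Real.exp_sum]

lemma integrable_exp_mul_sum_sq_norm_pi_complexGaussian (hv : v ≠ 0) (hs : 2 * s * v < 1) :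
    Integrable (fun x : κ → ℂ => exp (s * ∑ j, ‖x j‖ ^ 2))
      (Measure.pi fun _ => complexGaussian v) := by
  simp only [exp_mul_sum_sq_norm]
  exact Integrable.fintype_prod fun _ => integrable_exp_mul_sq_norm_complexGaussian hv hs

lemma mgf_sum_sq_norm_pi_complexGaussian (hv : v ≠ 0) (hs : 2 * s * v < 1) :
    mgf (fun x : κ → ℂ => ∑ j, ‖x j‖ ^ 2) (Measure.pi fun _ => complexGaussian v) s =
      (1 - 2 * s * v)⁻¹ ^ Fintype.card κ := by
  simp only [mgf, exp_mul_sum_sq_norm]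
  rw [integral_fintype_prod_eq_pow (fun z : ℂ => exp (s * ‖z‖ ^ 2)),
    integral_exp_mul_sq_norm_complexGaussian hv hs]

end ComplexGaussian

lemma measureReal_sum_ge_le_exp_mul_prod_mgf {Ω ι : Type*} [MeasurableSpace Ω] {μ : Measure Ω}
    [Fintype ι] {X : ι → Ω → ℝ} {t : ℝ} (h_indep : iIndepFun X μ)
    (h_meas : ∀ i, AEMeasurable (X i) μ) (ht : 0 ≤ t)
    (h_int : ∀ i, Integrable (fun ω => exp (t * X i ω)) μ) (ε : ℝ) :
    μ.real {ω | ε ≤ ∑ i, X i ω} ≤ exp (-t * ε) * ∏ i, mgf (X i) μ t := by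
  have : IsProbabilityMeasure μ := h_indep.isProbabilityMeasure
  set Y := fun i => (h_meas i).mk (X i)
  have hXY : ∀ i, X i =ᵐ[μ] Y i := fun i => (h_meas i).ae_eq_mk
  have hY_indep : iIndepFun Y μ := h_indep.congr hXY
  have hY_int : ∀ i, Integrable (fun ω => exp (t * Y i ω)) μ := fun i =>
    (h_int i).congr <| by filter_upwards [hXY i] with ω hω using by rw [hω]
  have hsum : ∀ᵐ ω ∂μ, ∑ i, X i ω = (∑ i, Y i) ω := by
    filter_upwards [ae_all_iff.2 hXY] with ω hω
    simp only [Finset.sum_apply, hω]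
  calc μ.real {ω | ε ≤ ∑ i, X i ω} = μ.real {ω | ε ≤ (∑ i, Y i) ω} :=
        measureReal_congr <| Filter.eventuallyEq_set.2 <| hsum.mono fun ω hω => by
          show ε ≤ _ ↔ ε ≤ _
          rw [hω]
    _ ≤ exp (-t * ε) * mgf (∑ i, Y i) μ t := measure_ge_le_exp_mul_mgf ε ht
        (hY_indep.integrable_exp_mul_sum (fun i => (h_meas i).measurable_mk) fun i _ => hY_int i)
    _ = exp (-t * ε) * ∏ i, mgf (X i) μ t := by
        rw [hY_indep.mgf_sum (fun i => (h_meas i).measurable_mk)]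
        simp only [mgf_congr (hXY _)]

lemma measureReal_sum_sq_norm_ge_le {Ω ι κ : Type*} [MeasurableSpace Ω] {μ : Measure Ω}
    [Fintype ι] [Fintype κ] {ξ : ι → Ω → κ → ℂ} {v : ℝ≥0} {s : ℝ} (hindep : iIndepFun ξ μ)
    (hlaw : ∀ i, μ.map (ξ i) = Measure.pi fun _ => complexGaussian v) (hv : v ≠ 0)
    (hs₀ : 0 ≤ s) (hs : 2 * s * v < 1) (ε : ℝ) :
    μ.real {ω | ε ≤ ∑ i, ∑ j, ‖ξ i ω j‖ ^ 2} ≤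
      exp (-s * ε) * ((1 - 2 * s * v)⁻¹ ^ Fintype.card κ) ^ Fintype.card ι := by
  have hξ : ∀ i, AEMeasurable (ξ i) μ := fun i =>
    aemeasurable_of_map_neZero (by rw [hlaw i]; infer_instance)
  set F : (κ → ℂ) → ℝ := fun x => ∑ j, ‖x j‖ ^ 2
  have hF : Measurable F := by fun_prop
  have hmgf : ∀ i, mgf (F ∘ ξ i) μ s = (1 - 2 * s * v)⁻¹ ^ Fintype.card κ := fun i => by
    rw [← mgf_map (hξ i) (hF.const_mul s).exp.aestronglyMeasurable, hlaw i,
      mgf_sum_sq_norm_pi_complexGaussian hv hs]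
  have hint : ∀ i, Integrable (fun ω => exp (s * (F ∘ ξ i) ω)) μ := fun i => by
    have := integrable_exp_mul_sum_sq_norm_pi_complexGaussian (κ := κ) hv hs
    rw [← hlaw i, integrable_map_measure (hF.const_mul s).exp.aestronglyMeasurable (hξ i)] at this
    exact this
  have := measureReal_sum_ge_le_exp_mul_prod_mgf
    (hindep.comp₀ (fun _ => F) hξ fun _ => hF.aemeasurable)
    (fun i => hF.comp_aemeasurable (hξ i)) hs₀ hint ε
  rw [Finset.prod_congr rfl fun i _ => hmgf i, Finset.prod_const, Finset.card_univ] at this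
  exact this

lemma sum_sq_norm_mulVec_le {nR nT : ℕ} {g : Matrix (Fin nR) (Fin nT) ℂ} {a : ℝ}
    (hg : matOpNorm g ≤ a) (x : Fin nT → ℂ) :
    ∑ j, ‖g.mulVec x j‖ ^ 2 ≤ a ^ 2 * ∑ j, ‖x j‖ ^ 2 := by
  have h := (LinearMap.toContinuousLinearMap (Matrix.toEuclideanLin g)).le_opNorm
    (WithLp.toLp 2 x)
  rw [LinearMap.coe_toContinuousLinearMap', Matrix.toLpLin_apply] at h
  have h' := pow_le_pow_left₀ (norm_nonneg _)
    (h.trans (mul_le_mul_of_nonneg_right hg (norm_nonneg _))) 2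
  simpa only [mul_pow, EuclideanSpace.norm_sq_eq, PiLp.toLp_apply] using h'

lemma sum_sq_norm_mulVec_add_le {n nR nT : ℕ} {g : Matrix (Fin nR) (Fin nT) ℂ} {a : ℝ}
    (hg : matOpNorm g ≤ a) (x : Fin n → Fin nT → ℂ) (y : Fin n → Fin nR → ℂ) :
    ∑ i, ∑ j, ‖g.mulVec (x i) j + y i j‖ ^ 2 ≤
      2 * (a ^ 2 * ∑ i, ∑ j, ‖x i j‖ ^ 2) + 2 * ∑ i, ∑ j, ‖y i j‖ ^ 2 := by
  calc ∑ i, ∑ j, ‖g.mulVec (x i) j + y i j‖ ^ 2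
      ≤ ∑ i, ∑ j, 2 * (‖g.mulVec (x i) j‖ ^ 2 + ‖y i j‖ ^ 2) := by
        gcongr with i _ j _
        exact (pow_le_pow_left₀ (norm_nonneg _) (norm_add_le _ _) 2).trans add_sq_le
    _ = 2 * ∑ i, ∑ j, ‖g.mulVec (x i) j‖ ^ 2 + 2 * ∑ i, ∑ j, ‖y i j‖ ^ 2 := by
        simp only [Finset.mul_sum, mul_add, Finset.sum_add_distrib]
    _ ≤ 2 * (a ^ 2 * ∑ i, ∑ j, ‖x i j‖ ^ 2) + 2 * ∑ i, ∑ j, ‖y i j‖ ^ 2 := by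
        rw [Finset.mul_sum (a := a ^ 2)]
        gcongr with i _
        exact sum_sq_norm_mulVec_le hg (x i)

lemma sum_le_mul_of_inv_mul_sum_le {n : ℕ} {f : Fin n → ℝ} {P : ℝ}
    (h : (n : ℝ)⁻¹ * ∑ i, f i ≤ P) : ∑ i, f i ≤ n * P := by
  rcases n.eq_zero_or_pos with rfl | hn
  · simp
  · rwa [inv_mul_le_iff₀ (by positivity)] at h

lemma one_add_mul_exp_neg_le_one (x : ℝ) : (1 + x) * exp (-x) ≤ 1 := by
  calc (1 + x) * exp (-x) ≤ exp x * exp (-x) := by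
        gcongr
        linarith [Real.add_one_le_exp x]
    _ = 1 := by rw [← Real.exp_add, add_neg_cancel, Real.exp_zero]

lemma exp_neg_mul_one_add_one_div_pow_le {c : ℝ} (hc : 0 < c) {m : ℕ} (hm : 1 ≤ m) (n : ℕ) :
    exp (-(n * m / c)) * ((1 + 1 / c) ^ m) ^ n ≤
      ((1 + 1 / c) * (2 : ℝ) ^ (-(1 / (c * Real.log 2)))) ^ n := by
  have h2 : (2 : ℝ) ^ (-(1 / (c * Real.log 2))) = exp (-(1 / c)) := by
    rw [Real.rpow_def_of_pos two_pos]
    field_simp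
  have hexp : exp (-(n * m / c)) = exp (-(1 / c)) ^ (m * n) := by
    rw [← Real.exp_nat_mul]
    push_cast
    ring_nf
  have hb : 0 ≤ (1 + 1 / c) * exp (-(1 / c)) := by positivity
  calc exp (-(n * m / c)) * ((1 + 1 / c) ^ m) ^ n
      = ((1 + 1 / c) * exp (-(1 / c))) ^ (m * n) := by
        rw [hexp, ← pow_mul, mul_pow, mul_comm]
    _ ≤ ((1 + 1 / c) * exp (-(1 / c))) ^ n :=
        pow_le_pow_of_le_one hb (one_add_mul_exp_neg_le_one _) (Nat.le_mul_of_pos_left n hm)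
    _ = _ := by rw [h2]

lemma measure_sum_sq_norm_complexGaussian_ge_le {Ω : Type*} [MeasurableSpace Ω]
    {μ : Measure Ω} {nR n : ℕ} (hnR : 1 ≤ nR) {σ : ℝ} (hσ : 0 < σ)
    {ξ : Fin n → Ω → Fin nR → ℂ} (hindep : iIndepFun ξ μ)
    (hlaw : ∀ i, μ.map (ξ i) = Measure.pi fun _ => complexGaussian (σ ^ 2 / 2).toNNReal) :
    μ {ω | n * (σ ^ 2 * nR + 1) ≤ ∑ i, ∑ j, ‖ξ i ω j‖ ^ 2} ≤
      ENNReal.ofReal (((1 + 1 / (σ ^ 2 * nR)) *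
        (2 : ℝ) ^ (-(1 / (σ ^ 2 * nR * Real.log 2)))) ^ n) := by
  have : IsProbabilityMeasure μ := hindep.isProbabilityMeasure
  set c := σ ^ 2 * nR with hc_def
  have hc : 0 < c := by positivity
  set v := (σ ^ 2 / 2).toNNReal
  have hv : (v : ℝ) = σ ^ 2 / 2 := Real.coe_toNNReal _ (by positivity)
  set s := (σ ^ 2 * (c + 1))⁻¹ with hs
  have h2sv : 2 * s * v = (c + 1)⁻¹ := by
    rw [hs, hv]
    field_simp
  have hmgf : (1 - 2 * s * v)⁻¹ = 1 + 1 / c := by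
    rw [h2sv]
    field_simp [hc.ne']
    ring
  have hsε : s * (n * (c + 1)) = n * nR / c := by
    rw [hs]
    field_simp
    rw [hc_def]
    ring
  have htail := measureReal_sum_sq_norm_ge_le (s := s) hindep hlaw (by positivity) (by positivity)
    (by rw [h2sv]; exact inv_lt_one_of_one_lt₀ (by linarith)) (n * (c + 1))
  rw [hmgf, neg_mul, hsε, Fintype.card_fin, Fintype.card_fin] at htail
  rw [← ofReal_measureReal]
  exact ENNReal.ofReal_le_ofReal (htail.trans (exp_neg_mul_one_add_one_div_pow_le hc hnR n))

theorem output_power_tail_bound_general {Ω : Type*} [MeasurableSpace Ω] (μ : Measure Ω)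
    [IsProbabilityMeasure μ]
    (nT nR n : ℕ) (hnR : 1 ≤ nR)
    (a P σ : ℝ) (hσ : 0 < σ)
    (g : Matrix (Fin nR) (Fin nT) ℂ) (hg : matOpNorm g ≤ a)
    (t : Fin n → Fin nT → ℂ)
    (ht : (n : ℝ)⁻¹ * ∑ i, ∑ j, ‖t i j‖ ^ 2 ≤ P)
    (ξ : Fin n → Ω → Fin nR → ℂ)
    (hindep : iIndepFun ξ μ)
    (hlaw : ∀ i, Measure.map (ξ i) μ =
      Measure.pi fun _ : Fin nR => complexGaussian (Real.toNNReal (σ ^ 2 / 2))) :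
    μ {ω | (n : ℝ) * (2 * a ^ 2 * P + 2 * nR * σ ^ 2 + 2) ≤
        ∑ i, ∑ j, ‖g.mulVec (t i) j + ξ i ω j‖ ^ 2} ≤
      ENNReal.ofReal (((1 + 1 / (σ ^ 2 * nR)) *
        (2 : ℝ) ^ (-(1 / (σ ^ 2 * nR * Real.log 2)))) ^ n) := by
  have hsignal := mul_le_mul_of_nonneg_left (sum_le_mul_of_inv_mul_sum_le ht) (sq_nonneg a)
  have hevent : {ω | (n : ℝ) * (2 * a ^ 2 * P + 2 * nR * σ ^ 2 + 2) ≤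
      ∑ i, ∑ j, ‖g.mulVec (t i) j + ξ i ω j‖ ^ 2} ⊆
      {ω | n * (σ ^ 2 * nR + 1) ≤ ∑ i, ∑ j, ‖ξ i ω j‖ ^ 2} :=
    Set.ofPred_subset_ofPred.2 fun ω hω => by
      linarith [sum_sq_norm_mulVec_add_le hg t (ξ · ω)]
  exact (measure_mono hevent).trans
    (measure_sum_sq_norm_complexGaussian_ge_le hnR hσ hindep hlaw)

/-- Let `‖g‖ ≤ a` (operator norm), let `t_1, …, t_n` satisfy the power constraint
`(1/n) ∑ᵢ ‖tᵢ‖² ≤ P`, and let `ξ_1, …, ξ_n` be i.i.d. centered circularly-symmetric complex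
Gaussian vectors in `ℂ^{N_R}` with covariance `σ² I` (each coordinate having independent
real and imaginary parts of variance `σ²/2`). With `Z_i = g t_i + ξ_i`,
`ℙ[∑ᵢ ‖Zᵢ‖² ≥ n(2a²P + 2N_Rσ² + 2)] ≤ ((1 + 1/(σ²N_R)) · 2^{-1/(σ²N_R ln 2)})ⁿ`. -/
theorem output_power_tail_bound {Ω : Type*} [MeasurableSpace Ω] (μ : Measure Ω)
    [IsProbabilityMeasure μ]
    (nT nR n : ℕ) (hnT : 1 ≤ nT) (hnR : 1 ≤ nR) (hn : 1 ≤ n)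
    (a P σ : ℝ) (ha : 0 < a) (hP : 0 < P) (hσ : 0 < σ)
    (g : Matrix (Fin nR) (Fin nT) ℂ) (hg : matOpNorm g ≤ a)
    (t : Fin n → Fin nT → ℂ)
    (ht : (n : ℝ)⁻¹ * ∑ i, ∑ j, ‖t i j‖ ^ 2 ≤ P)
    (ξ : Fin n → Ω → Fin nR → ℂ)
    (hindep : iIndepFun ξ μ)
    (hlaw : ∀ i, Measure.map (ξ i) μ =
      Measure.pi fun _ : Fin nR => complexGaussian (Real.toNNReal (σ ^ 2 / 2))) :
    μ {ω | (n : ℝ) * (2 * a ^ 2 * P + 2 * nR * σ ^ 2 + 2) ≤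
        ∑ i, ∑ j, ‖g.mulVec (t i) j + ξ i ω j‖ ^ 2} ≤
      ENNReal.ofReal (((1 + 1 / (σ ^ 2 * nR)) *
        (2 : ℝ) ^ (-(1 / (σ ^ 2 * nR * Real.log 2)))) ^ n) :=
  output_power_tail_bound_general μ nT nR n hnR a P σ hσ g hg t ht ξ hindep hlaw
end

section
/- Let a > 0, P > 0, ρ > 0, and let g, ĝ ∈ ℂ^{N_R×N_T} satisfy ‖g‖ ≤ a and ‖ĝ‖ ≤ a in operator norm. Let t_1,…,t_n ∈ ℂ^{N_T} and z_1,…,z_n ∈ ℂ^{N_R} satisfy (1/n) ∑_{i=1}^n ‖t_i‖² ≤ P and (1/n) ∑_{i=1}^n ‖z_i‖² ≤ ρ. Then ∑_{i=1}^n (‖z_i − ĝ t_i‖² − ‖z_i − g t_i‖²) ≤ 2n(√(Pρ) + aP) · ‖g − ĝ‖. Consequently, the ratio of the Gaussian channel densities satisfies ∏_{i=1}^n exp(−σ^{-2}‖z_i − g t_i‖²) / ∏_{i=1}^n exp(−σ^{-2}‖z_i − ĝ t_i‖²) ≤ 2^{(2n/(σ² ln 2))(√(Pρ) + aP)‖g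 − ĝ‖} for any σ > 0. -/
open Finset

theorem Fintype.sum_le_card_mul_of_inv_card_mul_sum_le {ι : Type*} [Fintype ι] {f : ι → ℝ}
    {P : ℝ} (h : (Fintype.card ι : ℝ)⁻¹ * ∑ i, f i ≤ P) : ∑ i, f i ≤ Fintype.card ι * P := by
  rcases isEmpty_or_nonempty ι with hι | hι
  · simp
  · rwa [← inv_mul_le_iff₀ (by exact_mod_cast Fintype.card_pos)]

theorem sq_norm_sub_sub_sq_norm_sub_le {E : Type*} [SeminormedAddCommGroup E] (z u u' : E) :
    ‖z - u'‖ ^ 2 - ‖z - u‖ ^ 2 ≤ ‖u - u'‖ * (2 * ‖z‖ + ‖u‖ + ‖u'‖) := by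
  have hdiff : ‖z - u'‖ - ‖z - u‖ ≤ ‖u - u'‖ := by
    simpa using le_of_abs_le (abs_norm_sub_norm_le (z - u') (z - u))
  have hsum : ‖z - u'‖ + ‖z - u‖ ≤ 2 * ‖z‖ + ‖u‖ + ‖u'‖ := by
    linarith [norm_sub_le z u', norm_sub_le z u]
  calc ‖z - u'‖ ^ 2 - ‖z - u‖ ^ 2 = (‖z - u'‖ - ‖z - u‖) * (‖z - u'‖ + ‖z - u‖) := by ring
    _ ≤ ‖u - u'‖ * (2 * ‖z‖ + ‖u‖ + ‖u'‖) := by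
      gcongr

theorem Real.sum_mul_le_card_mul_sqrt {ι : Type*} (s : Finset ι) {f g : ι → ℝ} {P ρ : ℝ}
    (hf : ∑ i ∈ s, f i ^ 2 ≤ #s * ρ) (hg : ∑ i ∈ s, g i ^ 2 ≤ #s * P) :
    ∑ i ∈ s, f i * g i ≤ #s * √(P * ρ) :=
  calc ∑ i ∈ s, f i * g i ≤ √(∑ i ∈ s, f i ^ 2) * √(∑ i ∈ s, g i ^ 2) :=
        Real.sum_mul_le_sqrt_mul_sqrt s f g
    _ ≤ √(#s * ρ) * √(#s * P) := by gcongr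
    _ = #s * √(P * ρ) := by
      rw [← Real.sqrt_mul' _ ((s.sum_nonneg fun i _ => sq_nonneg (g i)).trans hg),
        show (#s : ℝ) * ρ * (#s * P) = #s ^ 2 * (P * ρ) by ring,
        Real.sqrt_mul (sq_nonneg _), Real.sqrt_sq (Nat.cast_nonneg _)]

section OperatorPerturbation

variable {𝕜 E F : Type*} [NontriviallyNormedField 𝕜] [SeminormedAddCommGroup E]
  [NormedSpace 𝕜 E] [SeminormedAddCommGroup F] [NormedSpace 𝕜 F]

theorem sq_norm_sub_apply_sub_le {A B : E →L[𝕜] F} {a : ℝ} (hA : ‖A‖ ≤ a) (hB : ‖B‖ ≤ a)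
    (z : F) (x : E) :
    ‖z - B x‖ ^ 2 - ‖z - A x‖ ^ 2 ≤ 2 * ‖A - B‖ * (‖z‖ * ‖x‖ + a * ‖x‖ ^ 2) := by
  have hAB : ‖A x - B x‖ ≤ ‖A - B‖ * ‖x‖ := by
    simpa using (A - B).le_opNorm x
  calc ‖z - B x‖ ^ 2 - ‖z - A x‖ ^ 2 ≤ ‖A x - B x‖ * (2 * ‖z‖ + ‖A x‖ + ‖B x‖) :=
        sq_norm_sub_sub_sq_norm_sub_le z (A x) (B x)
    _ ≤ ‖A - B‖ * ‖x‖ * (2 * ‖z‖ + a * ‖x‖ + a * ‖x‖) := by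
      gcongr
      · exact A.le_of_opNorm_le hA x
      · exact B.le_of_opNorm_le hB x
    _ = 2 * ‖A - B‖ * (‖z‖ * ‖x‖ + a * ‖x‖ ^ 2) := by ring

theorem sum_sq_norm_sub_apply_sub_le {ι : Type*} [Fintype ι] {A B : E →L[𝕜] F} {a P ρ : ℝ}
    (hA : ‖A‖ ≤ a) (hB : ‖B‖ ≤ a) (x : ι → E) (z : ι → F)
    (hx : ∑ i, ‖x i‖ ^ 2 ≤ Fintype.card ι * P) (hz : ∑ i, ‖z i‖ ^ 2 ≤ Fintype.card ι * ρ) :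
    ∑ i, (‖z i - B (x i)‖ ^ 2 - ‖z i - A (x i)‖ ^ 2) ≤
      2 * Fintype.card ι * (√(P * ρ) + a * P) * ‖A - B‖ := by
  have ha : 0 ≤ a := (norm_nonneg A).trans hA
  have hcs : ∑ i, ‖z i‖ * ‖x i‖ ≤ Fintype.card ι * √(P * ρ) :=
    Real.sum_mul_le_card_mul_sqrt univ hz hx
  calc ∑ i, (‖z i - B (x i)‖ ^ 2 - ‖z i - A (x i)‖ ^ 2)
      ≤ ∑ i, 2 * ‖A - B‖ * (‖z i‖ * ‖x i‖ + a * ‖x i‖ ^ 2) :=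
        sum_le_sum fun i _ => sq_norm_sub_apply_sub_le hA hB (z i) (x i)
    _ = 2 * ‖A - B‖ * (∑ i, ‖z i‖ * ‖x i‖ + a * ∑ i, ‖x i‖ ^ 2) := by
      rw [← mul_sum, sum_add_distrib, mul_sum univ _ a]
    _ ≤ 2 * ‖A - B‖ * (Fintype.card ι * √(P * ρ) + a * (Fintype.card ι * P)) := by
      gcongr
    _ = 2 * Fintype.card ι * (√(P * ρ) + a * P) * ‖A - B‖ := by ring

end OperatorPerturbation

theorem Real.prod_exp_div_prod_exp_le {ι : Type*} (s : Finset ι) {c B : ℝ} (hc : 0 ≤ c)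
    (d d' : ι → ℝ) (h : ∑ i ∈ s, (d' i - d i) ≤ B) :
    (∏ i ∈ s, Real.exp (-c * d i)) / ∏ i ∈ s, Real.exp (-c * d' i) ≤ Real.exp (c * B) := by
  rw [← Real.exp_sum, ← Real.exp_sum, ← Real.exp_sub, Real.exp_le_exp, ← sum_sub_distrib]
  calc ∑ i ∈ s, (-c * d i - -c * d' i) = c * ∑ i ∈ s, (d' i - d i) := by
        rw [mul_sum]; exact sum_congr rfl fun i _ => by ring
    _ ≤ c * B := by gcongr

theorem Matrix.sum_norm_sub_mulVec_sq {m n : ℕ} (g : Matrix (Fin m) (Fin n) ℂ) (z : Fin m → ℂ)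
    (t : Fin n → ℂ) :
    ∑ j, ‖z j - g.mulVec t j‖ ^ 2 =
      ‖WithLp.toLp 2 z - LinearMap.toContinuousLinearMap (Matrix.toEuclideanLin g)
        (WithLp.toLp 2 t)‖ ^ 2 := by
  rw [EuclideanSpace.norm_sq_eq]
  rfl

theorem gaussian_density_ratio_bound_general
    (nT nR n : ℕ)
    (a P ρ σ : ℝ)
    (g g' : Matrix (Fin nR) (Fin nT) ℂ) (hg : matOpNorm g ≤ a) (hg' : matOpNorm g' ≤ a)
    (t : Fin n → Fin nT → ℂ) (z : Fin n → Fin nR → ℂ)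
    (ht : (n : ℝ)⁻¹ * ∑ i, ∑ j, ‖t i j‖ ^ 2 ≤ P)
    (hz : (n : ℝ)⁻¹ * ∑ i, ∑ j, ‖z i j‖ ^ 2 ≤ ρ) :
    (∑ i, ((∑ j, ‖z i j - g'.mulVec (t i) j‖ ^ 2) - ∑ j, ‖z i j - g.mulVec (t i) j‖ ^ 2) ≤
        2 * n * (Real.sqrt (P * ρ) + a * P) * matOpNorm (g - g')) ∧
      (∏ i, Real.exp (-(σ ^ 2)⁻¹ * ∑ j, ‖z i j - g.mulVec (t i) j‖ ^ 2)) /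
          (∏ i, Real.exp (-(σ ^ 2)⁻¹ * ∑ j, ‖z i j - g'.mulVec (t i) j‖ ^ 2)) ≤
        (2 : ℝ) ^ ((2 * n / (σ ^ 2 * Real.log 2)) * (Real.sqrt (P * ρ) + a * P) *
          matOpNorm (g - g')) := by
  have hT : ∑ i, ‖(WithLp.toLp 2 (t i) : EuclideanSpace ℂ (Fin nT))‖ ^ 2 ≤
      Fintype.card (Fin n) * P := by
    simp only [EuclideanSpace.norm_sq_eq]
    exact Fintype.sum_le_card_mul_of_inv_card_mul_sum_le (by rwa [Fintype.card_fin])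
  have hZ : ∑ i, ‖(WithLp.toLp 2 (z i) : EuclideanSpace ℂ (Fin nR))‖ ^ 2 ≤
      Fintype.card (Fin n) * ρ := by
    simp only [EuclideanSpace.norm_sq_eq]
    exact Fintype.sum_le_card_mul_of_inv_card_mul_sum_le (by rwa [Fintype.card_fin])
  have hsum : ∑ i, ((∑ j, ‖z i j - g'.mulVec (t i) j‖ ^ 2) -
      ∑ j, ‖z i j - g.mulVec (t i) j‖ ^ 2) ≤
      2 * n * (Real.sqrt (P * ρ) + a * P) * matOpNorm (g - g') := by
    have hperturb := sum_sq_norm_sub_apply_sub_le hg hg' _ _ hT hZ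
    rw [Fintype.card_fin, ← map_sub, ← map_sub] at hperturb
    simp only [Matrix.sum_norm_sub_mulVec_sq]
    exact hperturb
  refine ⟨hsum, (Real.prod_exp_div_prod_exp_le univ (by positivity) _ _ hsum).trans_eq ?_⟩
  rw [Real.rpow_def_of_pos two_pos]
  congr 1
  field_simp

/-- For `‖g‖, ‖g'‖ ≤ a` (operator norms) and sequences satisfying the power constraints
`(1/n) ∑ᵢ ‖tᵢ‖² ≤ P` and `(1/n) ∑ᵢ ‖zᵢ‖² ≤ ρ`, one has
`∑ᵢ (‖zᵢ - g' tᵢ‖² - ‖zᵢ - g tᵢ‖²) ≤ 2n(√(Pρ) + aP)‖g - g'‖`, and consequently the ratio of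
the Gaussian channel densities is at most `2^{(2n/(σ² ln 2))(√(Pρ) + aP)‖g - g'‖}`. -/
theorem gaussian_density_ratio_bound
    (nT nR n : ℕ) (hnT : 1 ≤ nT) (hnR : 1 ≤ nR) (hn : 1 ≤ n)
    (a P ρ σ : ℝ) (ha : 0 < a) (hP : 0 < P) (hρ : 0 < ρ) (hσ : 0 < σ)
    (g g' : Matrix (Fin nR) (Fin nT) ℂ) (hg : matOpNorm g ≤ a) (hg' : matOpNorm g' ≤ a)
    (t : Fin n → Fin nT → ℂ) (z : Fin n → Fin nR → ℂ)
    (ht : (n : ℝ)⁻¹ * ∑ i, ∑ j, ‖t i j‖ ^ 2 ≤ P)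
    (hz : (n : ℝ)⁻¹ * ∑ i, ∑ j, ‖z i j‖ ^ 2 ≤ ρ) :
    (∑ i, ((∑ j, ‖z i j - g'.mulVec (t i) j‖ ^ 2) - ∑ j, ‖z i j - g.mulVec (t i) j‖ ^ 2) ≤
        2 * n * (Real.sqrt (P * ρ) + a * P) * matOpNorm (g - g')) ∧
      (∏ i, Real.exp (-(σ ^ 2)⁻¹ * ∑ j, ‖z i j - g.mulVec (t i) j‖ ^ 2)) /
          (∏ i, Real.exp (-(σ ^ 2)⁻¹ * ∑ j, ‖z i j - g'.mulVec (t i) j‖ ^ 2)) ≤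
        (2 : ℝ) ^ ((2 * n / (σ ^ 2 * Real.log 2)) * (Real.sqrt (P * ρ) + a * P) *
          matOpNorm (g - g')) :=
  gaussian_density_ratio_bound_general nT nR n a P ρ σ g g' hg hg' t z ht hz
end

section
/- Let a > 0, ε > 0, σ > 0, and let S be a nonempty closed subset of {g ∈ ℂ^{N_R×N_T} : ‖g‖ ≤ a}, where ‖g‖ is the operator norm. Then there exists a Hermitian positive definite matrix Q ∈ Q_P with tr(Q) < P such that for all g ∈ S, f(g,Q) ≥ sup_{Q' ∈ Q_P} inf_{g' ∈ S} f(g',Q') − ε. -/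
set_option maxHeartbeats 1000000


open scoped ComplexOrder

lemma smul_posSemidef {n : ℕ} {M : Matrix (Fin n) (Fin n) ℂ} (hM : M.PosSemidef)
    {r : ℝ} (hr : 0 ≤ r) : ((r : ℂ) • M).PosSemidef := by
  rw [Matrix.posSemidef_iff_dotProduct_mulVec]
  constructor
  · unfold Matrix.IsHermitian
    rw [Matrix.conjTranspose_smul, hM.1.eq]
    congr 1
    simp
  · intro x
    rw [Matrix.smul_mulVec, dotProduct_smul, smul_eq_mul]
    exact mul_nonneg (Complex.zero_le_real.mpr hr) (hM.dotProduct_mulVec_nonneg x)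

lemma smul_posDef {n : ℕ} {M : Matrix (Fin n) (Fin n) ℂ} (hM : M.PosDef)
    {r : ℝ} (hr : 0 < r) : ((r : ℂ) • M).PosDef := by
  rw [Matrix.posDef_iff_dotProduct_mulVec]
  constructor
  · unfold Matrix.IsHermitian
    rw [Matrix.conjTranspose_smul, hM.1.eq]
    congr 1
    simp
  · intro x hx
    rw [Matrix.smul_mulVec, dotProduct_smul, smul_eq_mul]
    exact mul_pos (Complex.zero_lt_real.mpr hr) (hM.dotProduct_mulVec_pos hx)

open Matrix in
lemma one_le_det_re_one_add {n : ℕ} {N : Matrix (Fin n) (Fin n) ℂ} (hN : N.PosSemidef) :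
    1 ≤ (1 + N).det.re := by
  have hA : (1 + N).IsHermitian := Matrix.isHermitian_one.add hN.1
  have heig : ∀ i, 1 ≤ hA.eigenvalues i := by
    intro i
    set v : Fin n → ℂ := ⇑(hA.eigenvectorBasis i) with hv
    have hmv : (1 + N) *ᵥ v = (hA.eigenvalues i) • v := hA.mulVec_eigenvectorBasis i
    have hvv : dotProduct (star v) v = 1 := by
      have := (EuclideanSpace.inner_eq_star_dotProduct (𝕜 := ℂ)
        (hA.eigenvectorBasis i) (hA.eigenvectorBasis i)).symm
      rw [inner_self_eq_norm_sq_to_K, hA.eigenvectorBasis.orthonormal.1 i] at this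
      simp at this; rw [dotProduct_comm]; exact this
    have hNv : N *ᵥ v = (hA.eigenvalues i) • v - v := by
      rw [← hmv, Matrix.add_mulVec, Matrix.one_mulVec]; abel
    have h0 := hN.dotProduct_mulVec_nonneg v
    rw [hNv, dotProduct_sub, dotProduct_smul, hvv] at h0
    have h0' : (0:ℂ) ≤ ((hA.eigenvalues i - 1 : ℝ) : ℂ) := by
      push_cast
      simpa [Complex.real_smul] using h0
    have := Complex.zero_le_real.mp h0'
    linarith
  rw [hA.det_eq_prod_eigenvalues, ← RCLike.ofReal_prod]
  rw [show ((RCLike.ofReal (∏ i : Fin n, hA.eigenvalues i) : ℂ)) = ((∏ i : Fin n, hA.eigenvalues i : ℝ) : ℂ) from rfl, Complex.ofReal_re]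
  calc (1:ℝ) = ∏ _i : Fin n, 1 := by simp
    _ ≤ ∏ i : Fin n, hA.eigenvalues i :=
        Finset.prod_le_prod (fun i _ => zero_le_one) (fun i _ => heig i)

lemma det_arg_ge_one {nR nT : ℕ} (σ : ℝ) (hσ : σ ≠ 0) (g : Matrix (Fin nR) (Fin nT) ℂ)
    {Q : Matrix (Fin nT) (Fin nT) ℂ} (hQ : Q.PosSemidef) :
    1 ≤ (1 + ((σ : ℂ) ^ 2)⁻¹ • (g * Q * g.conjTranspose)).det.re := by
  have h1 : ((σ:ℂ)^2)⁻¹ = (((σ^2)⁻¹ : ℝ) : ℂ) := by push_cast; ring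
  rw [h1]
  exact one_le_det_re_one_add (smul_posSemidef (hQ.mul_mul_conjTranspose_same g) (by positivity))

lemma rateFn_nonneg {nR nT : ℕ} {σ : ℝ} (hσ : σ ≠ 0) (g : Matrix (Fin nR) (Fin nT) ℂ)
    {Q : Matrix (Fin nT) (Fin nT) ℂ} (hQ : Q.PosSemidef) : 0 ≤ rateFn σ g Q :=
  Real.logb_nonneg one_lt_two (det_arg_ge_one σ hσ g hQ)

/-- For a nonempty closed subset `S` of the operator-norm ball of radius `a`, there is a
Hermitian positive definite `Q ∈ Q_P` with `tr(Q) < P` such that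
`f(g,Q) ≥ sup_{Q' ∈ Q_P} inf_{g' ∈ S} f(g',Q') - ε` for all `g ∈ S`. -/
theorem exists_posDef_near_compound_capacity
    (nT nR : ℕ) (hnT : 1 ≤ nT) (hnR : 1 ≤ nR) (a ε P σ : ℝ)
    (ha : 0 < a) (hε : 0 < ε) (hP : 0 < P) (hσ : 0 < σ)
    (S : Set (Matrix (Fin nR) (Fin nT) ℂ)) (hSne : S.Nonempty) (hScl : IsClosed S)
    (hSball : S ⊆ {g | matOpNorm g ≤ a}) :
    ∃ Q ∈ QPset nT P, Q.PosDef ∧ Q.trace.re < P ∧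
      ∀ g ∈ S, (sSup ((fun Q' => sInf ((fun g' => rateFn σ g' Q') '' S)) '' (QPset nT P))) - ε ≤ rateFn σ g Q := by
  classical
  set C : ℝ := sSup ((fun Q' => sInf ((fun g' => rateFn σ g' Q') '' S)) '' (QPset nT P)) with hC
  have hσ' : σ ≠ 0 := ne_of_gt hσ
  -- Step A: find Q₁ ∈ QPset with rateFn σ g Q₁ ≥ C - ε/2 on S
  obtain ⟨Q₁, hQ₁mem, hQ₁lb⟩ :
      ∃ Q₁ ∈ QPset nT P, ∀ g ∈ S, C - ε/2 ≤ rateFn σ g Q₁ := by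
    have h0mem : (0 : Matrix (Fin nT) (Fin nT) ℂ) ∈ QPset nT P :=
      ⟨Matrix.PosSemidef.zero, by simpa using hP.le⟩
    by_cases hbdd : BddAbove ((fun Q' => sInf ((fun g' => rateFn σ g' Q') '' S)) '' (QPset nT P))
    · have h1 : C - ε/2 < C := by linarith
      obtain ⟨_, ⟨Q₀, hm, rfl⟩, hQ₀⟩ :=
        exists_lt_of_lt_csSup (Set.Nonempty.image _ ⟨0, h0mem⟩) h1
      refine ⟨Q₀, hm, fun g hg => ?_⟩
      have hb : BddBelow ((fun g' => rateFn σ g' Q₀) '' S) := by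
        refine ⟨0, ?_⟩
        rintro x ⟨g', -, rfl⟩
        exact rateFn_nonneg hσ' g' hm.1
      have h3 : C - ε/2 < sInf ((fun g' => rateFn σ g' Q₀) '' S) := hQ₀
      have h2 : sInf ((fun g' => rateFn σ g' Q₀) '' S) ≤ rateFn σ g Q₀ :=
        csInf_le hb ⟨g, hg, rfl⟩
      linarith
    · have hC0 : C = 0 := Real.sSup_of_not_bddAbove hbdd
      refine ⟨0, h0mem, fun g hg => ?_⟩
      have h0 := rateFn_nonneg hσ' g (Matrix.PosSemidef.zero (n := Fin nT) (R := ℂ))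
      linarith
  have hQ₁psd : Q₁.PosSemidef := hQ₁mem.1
  set c₀ : ℝ := P / (2 * nT) with hc₀def
  have hnT' : (0:ℝ) < nT := by exact_mod_cast hnT
  have hc₀ : 0 < c₀ := by positivity
  set D : ℝ → Matrix (Fin nT) (Fin nT) ℂ :=
    fun δ => ((1 - δ : ℝ) : ℂ) • Q₁ + ((δ * c₀ : ℝ) : ℂ) • (1 : Matrix (Fin nT) (Fin nT) ℂ)
    with hD
  have hD0 : D 0 = Q₁ := by simp [hD]
  set cf : ℝ × Matrix (Fin nR) (Fin nT) ℂ → ℝ :=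
    fun p => (1 + ((σ:ℂ)^2)⁻¹ • (p.2 * D p.1 * p.2.conjTranspose)).det.re with hcf
  have hcont : Continuous cf := by
    apply Complex.continuous_re.comp
    apply Continuous.matrix_det
    refine Continuous.add continuous_const ?_
    refine Continuous.const_smul ?_ (((σ:ℂ)^2)⁻¹)
    refine Continuous.matrix_mul (Continuous.matrix_mul continuous_snd ?_)
      (continuous_snd.matrix_conjTranspose)
    refine Continuous.add ?_ ?_
    · exact (Complex.continuous_ofReal.comp (continuous_const.sub continuous_fst)).smul
        continuous_const
    · exact (Complex.continuous_ofReal.comp (continuous_fst.mul continuous_const)).smul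
        continuous_const
  have hrate : ∀ δ g, rateFn σ g (D δ) = Real.logb 2 (cf (δ, g)) := fun _ _ => rfl
  have hc0ge : ∀ g : Matrix (Fin nR) (Fin nT) ℂ, 1 ≤ cf (0, g) := by
    intro g
    have : cf (0, g) = (1 + ((σ:ℂ)^2)⁻¹ • (g * Q₁ * g.conjTranspose)).det.re := by
      simp only [hcf, hD0]
    rw [this]
    exact det_arg_ge_one σ hσ' g hQ₁psd
  set W : Set (ℝ × Matrix (Fin nR) (Fin nT) ℂ) := {p | 0 < cf p} with hW
  have hWopen : IsOpen W := isOpen_lt continuous_const hcont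
  set φ : ℝ × Matrix (Fin nR) (Fin nT) ℂ → ℝ :=
    fun p => Real.logb 2 (cf p) - Real.logb 2 (cf (0, p.2)) with hφ
  have hφcont : ContinuousOn φ W := by
    intro p hp
    apply ContinuousAt.continuousWithinAt
    apply ContinuousAt.sub
    · exact (Real.continuousAt_logb (ne_of_gt hp)).comp hcont.continuousAt
    · have h2 : Continuous fun q : ℝ × Matrix (Fin nR) (Fin nT) ℂ => cf (0, q.2) :=
        hcont.comp (continuous_const.prodMk continuous_snd)
      exact ContinuousAt.comp (g := Real.logb 2) (f := fun q : ℝ × Matrix (Fin nR) (Fin nT) ℂ => cf (0, q.2))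
        (Real.continuousAt_logb (ne_of_gt (lt_of_lt_of_le zero_lt_one (hc0ge p.2))))
        h2.continuousAt
  set nset := W ∩ φ ⁻¹' (Set.Ioi (-(ε/2))) with hnset
  have hnopen : IsOpen nset := hφcont.isOpen_inter_preimage hWopen isOpen_Ioi
  have hsub : ({(0:ℝ)} ×ˢ S) ⊆ nset := by
    rintro ⟨x, g⟩ ⟨hx, hg⟩
    simp only [Set.mem_singleton_iff] at hx
    subst hx
    constructor
    · exact lt_of_lt_of_le zero_lt_one (hc0ge g)
    · simp only [Set.mem_preimage, Set.mem_Ioi, hφ, sub_self]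
      linarith
  have hScomp : IsCompact S := by
    set e := LinearEquiv.toContinuousLinearEquiv
      ((Matrix.toEuclideanLin :
          Matrix (Fin nR) (Fin nT) ℂ ≃ₗ[ℂ]
            (EuclideanSpace ℂ (Fin nT) →ₗ[ℂ] EuclideanSpace ℂ (Fin nR))).trans
        LinearMap.toContinuousLinearMap) with he
    haveI : ProperSpace (EuclideanSpace ℂ (Fin nT) →L[ℂ] EuclideanSpace ℂ (Fin nR)) :=
      FiniteDimensional.proper ℂ _
    have hKc : IsCompact (e.symm '' Metric.closedBall 0 a) :=
      (isCompact_closedBall 0 a).image e.symm.continuous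
    refine hKc.of_isClosed_subset hScl ?_
    intro g hg
    refine ⟨e g, ?_, by simp⟩
    rw [Metric.mem_closedBall, dist_zero_right]
    exact hSball hg
  obtain ⟨u, v, huo, hvo, h0u, hSv, huv⟩ :=
    generalized_tube_lemma isCompact_singleton hScomp hnopen hsub
  obtain ⟨δ₀, hδ₀pos, hball⟩ := Metric.isOpen_iff.mp huo 0 (h0u rfl)
  set δ := min (δ₀ / 2) (1 / 2) with hδdef
  have hδpos : 0 < δ := by positivity
  have hδ1 : δ < 1 := lt_of_le_of_lt (min_le_right _ _) (by norm_num)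
  have hδu : δ ∈ u := by
    apply hball
    rw [Metric.mem_ball, dist_zero_right, Real.norm_eq_abs, abs_of_pos hδpos]
    calc δ ≤ δ₀/2 := min_le_left _ _
      _ < δ₀ := by linarith
  have hpd : (D δ).PosDef := by
    rw [hD]
    exact Matrix.PosDef.posSemidef_add
      (smul_posSemidef hQ₁psd (by linarith))
      (smul_posDef Matrix.PosDef.one (by positivity))
  have htr : (D δ).trace.re = (1 - δ) * Q₁.trace.re + δ * c₀ * nT := by
    simp only [hD, Matrix.trace_add, Matrix.trace_smul, Matrix.trace_one, smul_eq_mul,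
      Complex.add_re, Complex.re_ofReal_mul, Fintype.card_fin, Complex.natCast_re]
  have htrQ₁ : Q₁.trace.re ≤ P := hQ₁mem.2
  have hc₀nT : c₀ * nT = P / 2 := by
    rw [hc₀def]; field_simp
  have htrlt : (D δ).trace.re < P := by
    rw [htr]
    have h1 : δ * c₀ * (nT:ℝ) = δ * (P/2) := by rw [mul_assoc, hc₀nT]
    rw [h1]
    nlinarith
  refine ⟨D δ, ⟨hpd.posSemidef, htrlt.le⟩, hpd, htrlt, ?_⟩
  intro g hg
  have hmem : (δ, g) ∈ nset := huv ⟨hδu, hSv hg⟩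
  have hφgt : -(ε/2) < φ (δ, g) := hmem.2
  have h1 : rateFn σ g Q₁ = Real.logb 2 (cf (0, g)) := by
    rw [← hD0]; exact hrate 0 g
  have h2 : rateFn σ g (D δ) = Real.logb 2 (cf (δ, g)) := hrate δ g
  have hlb := hQ₁lb g hg
  simp only [hφ] at hφgt
  rw [h2]
  rw [h1] at hlb
  linarith
end
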